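/- arXiv:2507.03929 — 4 statements merged into one kernel-verified Lean document; each statement's English description precedes it below -/
import Mathlib

section
/- (Minimal hitting set duality) Let F be a finite unsatisfiable CNF formula. A subset H ⊆ F is a MUS of F if and only if H is a minimal hitting set of the collection of all MCSes of F. -/
/-- A literal is a variable together with a polarity (`true` = positive);
a clause is a finite set of literals. -/
abbrev Clause (V : Type) := Finset (V × Bool)

/-- An assignment satisfies a clause if it makes some literal of the clause true. -/
def SatClause {V : Type} (sigma : V → Bool) (C : Clause V) : Prop :=
  ∃ l ∈ C, sigma l.1 = l.2

/-- An assignment satisfies a set of clauses if it satisfies each clause. -/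
def SatSet {V : Type} (sigma : V → Bool) (S : Finset (Clause V)) : Prop :=
  ∀ C ∈ S, SatClause sigma C

/-- A set of clauses is satisfiable if some assignment satisfies it. -/
def Satisfiable {V : Type} (S : Finset (Clause V)) : Prop :=
  ∃ sigma : V → Bool, SatSet sigma S

/-- A MUS of `F`: an unsatisfiable subset `F' ⊆ F` such that removing any clause
from `F'` makes it satisfiable. -/
def IsMUS {V : Type} [DecidableEq V] (F F' : Finset (Clause V)) : Prop :=
  F' ⊆ F ∧ ¬ Satisfiable F' ∧ ∀ C ∈ F', Satisfiable (F'.erase C)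

/-- An MCS of `F`: a subset `F' ⊆ F` such that `F \ F'` is satisfiable and
adding back any clause of `F'` yields an unsatisfiable set. -/
def IsMCS {V : Type} [DecidableEq V] (F F' : Finset (Clause V)) : Prop :=
  F' ⊆ F ∧ Satisfiable (F \ F') ∧ ∀ C ∈ F', ¬ Satisfiable (F \ (F'.erase C))

/-- `H` is a hitting set of the collection of all MCSes of `F`. -/
def HitsAllMCSes {V : Type} [DecidableEq V] (F H : Finset (Clause V)) : Prop :=
  ∀ N : Finset (Clause V), IsMCS F N → (H ∩ N).Nonempty

lemma sat_mono {V : Type} {S T : Finset (Clause V)} (hST : S ⊆ T)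
    (h : Satisfiable T) : Satisfiable S := by
  obtain ⟨σ, hσ⟩ := h
  exact ⟨σ, fun C hC => hσ C (hST hC)⟩

lemma exists_maximal_sat {V : Type} [DecidableEq V] {F S : Finset (Clause V)}
    (hSF : S ⊆ F) (hS : Satisfiable S) :
    ∃ M, S ⊆ M ∧ M ⊆ F ∧ Satisfiable M ∧
      ∀ C ∈ F, C ∉ M → ¬ Satisfiable (insert C M) := by
  classical
  set P := F.powerset.filter (fun M => S ⊆ M ∧ Satisfiable M) with hP
  have hne : P.Nonempty := ⟨S, by simp [hP, Finset.mem_powerset, hSF, hS]⟩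
  obtain ⟨M, hM, hmax⟩ := P.exists_max_image Finset.card hne
  simp only [hP, Finset.mem_filter, Finset.mem_powerset] at hM
  refine ⟨M, hM.2.1, hM.1, hM.2.2, fun C hCF hCM hsat => ?_⟩
  have hmem : insert C M ∈ P := by
    simp only [hP, Finset.mem_filter, Finset.mem_powerset]
    exact ⟨Finset.insert_subset hCF hM.1, hM.2.1.trans (Finset.subset_insert _ _), hsat⟩
  have := hmax _ hmem
  rw [Finset.card_insert_of_notMem hCM] at this
  omega

lemma hits_iff_unsat {V : Type} [DecidableEq V] {F H : Finset (Clause V)}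
    (hH : H ⊆ F) : HitsAllMCSes F H ↔ ¬ Satisfiable H := by
  constructor
  · intro hhits hsat
    obtain ⟨M, hHM, hMF, hMsat, hMmax⟩ := exists_maximal_sat hH hsat
    have hMCS : IsMCS F (F \ M) := by
      refine ⟨Finset.sdiff_subset, ?_, fun C hC => ?_⟩
      · rwa [Finset.sdiff_sdiff_self_left, Finset.inter_eq_right.mpr hMF]
      · have hCF : C ∈ F := (Finset.mem_sdiff.mp hC).1
        have hCM : C ∉ M := (Finset.mem_sdiff.mp hC).2
        have heq : F \ ((F \ M).erase C) = insert C M := by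
          ext x
          simp only [Finset.mem_sdiff, Finset.mem_erase, Finset.mem_insert]
          constructor
          · rintro ⟨hxF, hx⟩
            by_cases hxC : x = C
            · exact Or.inl hxC
            · right
              by_contra hxM
              exact hx ⟨hxC, hxF, hxM⟩
          · rintro (rfl | hxM)
            · exact ⟨hCF, fun h => h.1 rfl⟩
            · exact ⟨hMF hxM, fun h => h.2.2 hxM⟩
        rw [heq]
        exact hMmax C hCF hCM
    obtain ⟨x, hx⟩ := hhits _ hMCS
    rw [Finset.mem_inter, Finset.mem_sdiff] at hx
    exact hx.2.2 (hHM hx.1)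
  · intro hunsat N hN
    by_contra hempty
    rw [Finset.not_nonempty_iff_eq_empty] at hempty
    have hsub : H ⊆ F \ N := by
      intro x hx
      rw [Finset.mem_sdiff]
      refine ⟨hH hx, fun hxN => ?_⟩
      have : x ∈ H ∩ N := Finset.mem_inter.mpr ⟨hx, hxN⟩
      simp [hempty] at this
    exact hunsat (sat_mono hsub hN.2.1)

/-- **minimal hitting set duality.** For a finite unsatisfiable CNF
formula `F`, a subset `H ⊆ F` is a MUS of `F` iff `H` is a minimal hitting set of the
collection of all MCSes of `F`. -/
theorem mus_iff_minimal_hitting_set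
    (V : Type) [Fintype V] [DecidableEq V] (F : Finset (Clause V))
    (hF : ¬ Satisfiable F) (H : Finset (Clause V)) (hH : H ⊆ F) :
    IsMUS F H ↔
      (HitsAllMCSes F H ∧ ∀ H' : Finset (Clause V), H' ⊂ H → ¬ HitsAllMCSes F H') := by
  constructor
  · rintro ⟨-, hunsat, herase⟩
    refine ⟨(hits_iff_unsat hH).mpr hunsat, fun H' hH' hhits => ?_⟩
    have hH'F : H' ⊆ F := hH'.subset.trans hH
    obtain ⟨C, hCH, hCH'⟩ := Finset.exists_of_ssubset hH'
    have hsub : H' ⊆ H.erase C := fun x hx =>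
      Finset.mem_erase.mpr ⟨fun h => hCH' (h ▸ hx), hH'.subset hx⟩
    exact (hits_iff_unsat hH'F).mp hhits (sat_mono hsub (herase C hCH))
  · rintro ⟨hhits, hmin⟩
    refine ⟨hH, (hits_iff_unsat hH).mp hhits, fun C hC => ?_⟩
    have hss : H.erase C ⊂ H := Finset.erase_ssubset hC
    have := hmin _ hss
    by_contra hsat
    exact this ((hits_iff_unsat ((Finset.erase_subset _ _).trans hH)).mpr hsat)
end

section
/- (Negative literal cover) If F' is a MUS of a CNF formula F, C is a clause in F', and ℓ is a literal with ℓ ∈ C, then there exists a clause C' ∈ F' with ¬ℓ ∈ C'. -/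
/-- The negation of a literal. -/
def negLit {V : Type} (l : V × Bool) : V × Bool := (l.1, !l.2)

/-- **negative literal cover.** If `F'` is a MUS of `F`, `C ∈ F'` and
`ℓ ∈ C`, then some clause `C' ∈ F'` contains `¬ℓ`. -/
theorem mus_negative_literal_cover
    (V : Type) [Fintype V] [DecidableEq V] (F F' : Finset (Clause V))
    (hF' : IsMUS F F') (C : Clause V) (hC : C ∈ F') (l : V × Bool) (hl : l ∈ C) :
    ∃ C' ∈ F', negLit l ∈ C' := by
  obtain ⟨_, hunsat, hmin⟩ := hF'
  by_contra hno
  push_neg at hno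
  obtain ⟨σ, hσ⟩ := hmin C hC
  set σ' : V → Bool := fun v => if v = l.1 then l.2 else σ v with hσ'def
  apply hunsat
  refine ⟨σ', fun D hD => ?_⟩
  by_cases hDC : D = C
  · exact ⟨l, hDC ▸ hl, by simp [hσ'def]⟩
  · obtain ⟨m, hm, hmsat⟩ := hσ D (Finset.mem_erase.mpr ⟨hDC, hD⟩)
    by_cases hv : m.1 = l.1
    · by_cases hb : m.2 = l.2
      · exact ⟨m, hm, by simp [hσ'def, hv, hb]⟩
      · exfalso
        apply hno D hD
        have : m = negLit l := by
          unfold negLit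
          obtain ⟨a,b⟩ := m; obtain ⟨c,d⟩ := l
          simp_all
          cases b <;> cases d <;> simp_all
        exact this ▸ hm
    · exact ⟨m, hm, by simp [hσ'def, hv, hmsat]⟩
end

section
/- (Component decomposition) All clauses of a MUS of F lie in the same connected component of the clause graph of F; equivalently, a MUS of F cannot contain two clauses belonging to different connected components of the clause graph. -/
/-- The clause graph of `F`: vertices are the clauses of `F`, with an edge between
distinct clauses `C` and `D` whenever some literal `ℓ` satisfies `ℓ ∈ C` and `¬ℓ ∈ D`. -/
def clauseGraph {V : Type} (F : Finset (Clause V)) :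
    SimpleGraph {C : Clause V // C ∈ F} where
  Adj C D := C ≠ D ∧ ∃ l ∈ (C : Clause V), negLit l ∈ (D : Clause V)
  symm := by
    constructor
    rintro C D ⟨hne, l, hl, hnl⟩
    refine ⟨hne.symm, negLit l, hnl, ?_⟩
    simpa [negLit, Bool.not_not] using hl
  loopless := by
    constructor
    rintro C ⟨hne, -⟩
    exact hne rfl

/-- **component decomposition.** All clauses of a MUS of `F` lie in the
same connected component of the clause graph of `F`. -/
theorem mus_clauses_in_same_component
    (V : Type) [Fintype V] [DecidableEq V] (F F' : Finset (Clause V))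
    (hF' : IsMUS F F') (C D : Clause V) (hC : C ∈ F') (hD : D ∈ F')
    (hCF : C ∈ F) (hDF : D ∈ F) :
    (clauseGraph F).Reachable ⟨C, hCF⟩ ⟨D, hDF⟩ := by
  classical
  by_contra hreach
  obtain ⟨hsub, hunsat, hmin⟩ := hF'
  set P : Clause V → Prop := fun E => ∃ h : E ∈ F, (clauseGraph F).Reachable ⟨C, hCF⟩ ⟨E, h⟩
    with hP
  set A := F'.filter P with hAdef
  set B := F' \ A with hBdef
  have hCA : C ∈ A := Finset.mem_filter.2 ⟨hC, hCF, SimpleGraph.Reachable.refl _⟩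
  have hDnA : D ∉ A := by
    intro hmem
    obtain ⟨-, h, hr⟩ := Finset.mem_filter.1 hmem
    exact hreach hr
  have hDB : D ∈ B := Finset.mem_sdiff.2 ⟨hD, hDnA⟩
  obtain ⟨σA, hσA⟩ := hmin D hD
  obtain ⟨σB, hσB⟩ := hmin C hC
  -- no edge between A and B
  have cross : ∀ EA ∈ A, ∀ EB ∈ B, ∀ l ∈ EA, negLit l ∉ EB := by
    intro EA hEA EB hEB l hl hnl
    obtain ⟨hEA', hEAF, hrA⟩ := Finset.mem_filter.1 hEA
    obtain ⟨hEB', hEBn⟩ := Finset.mem_sdiff.1 hEB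
    have hEBF : EB ∈ F := hsub hEB'
    apply hEBn
    refine Finset.mem_filter.2 ⟨hEB', hEBF, ?_⟩
    have hne : EA ≠ EB := by rintro rfl; exact hEBn hEA
    exact hrA.trans (SimpleGraph.Adj.reachable
      ⟨fun h => hne (congrArg Subtype.val h), l, hl, hnl⟩)
  set σ : V → Bool := fun v =>
    if ∃ E ∈ B, ((v, σB v) : V × Bool) ∈ E then σB v else σA v with hσdef
  apply hunsat
  refine ⟨σ, fun E hE => ?_⟩
  by_cases hEA : E ∈ A
  · have hEne : E ≠ D := by rintro rfl; exact hDnA hEA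
    obtain ⟨l, hl, hsat⟩ := hσA E (Finset.mem_erase.2 ⟨hEne, hE⟩)
    refine ⟨l, hl, ?_⟩
    rw [hσdef]
    simp only
    split
    · next hex =>
        obtain ⟨E', hE', hmem⟩ := hex
        have hval : σB l.1 = l.2 ∨ σB l.1 = !l.2 := by
          cases σB l.1 <;> cases hb : l.2 <;> simp
        rcases hval with h | h
        · exact h
        · exfalso
          apply cross E hEA E' hE' l hl
          have : negLit l = (l.1, σB l.1) := by
            simp [negLit, h]
          rw [this]
          exact hmem
    · exact hsat
  · have hEB : E ∈ B := Finset.mem_sdiff.2 ⟨hE, hEA⟩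
    have hEne : E ≠ C := by rintro rfl; exact hEA hCA
    obtain ⟨l, hl, hsat⟩ := hσB E (Finset.mem_erase.2 ⟨hEne, hE⟩)
    refine ⟨l, hl, ?_⟩
    rw [hσdef]
    simp only
    have hcond : ∃ E' ∈ B, ((l.1, σB l.1) : V × Bool) ∈ E' := by
      refine ⟨E, hEB, ?_⟩
      have : ((l.1, σB l.1) : V × Bool) = l := by
        rw [hsat]
      rw [this]; exact hl
    rw [if_pos hcond]
    exact hsat
end

section
/- If F is a CNF formula with n clauses, then the number of distinct MUSes of F is at most the binomial coefficient C(n, ⌊n/2⌋). -/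
/-- A CNF formula with `n` clauses has at most `C(n, ⌊n/2⌋)` MUSes. -/
theorem mus_count_le_central_binom
    (V : Type) [Fintype V] [DecidableEq V] (F : Finset (Clause V)) :
    {F' : Finset (Clause V) | IsMUS F F'}.ncard ≤ (F.card).choose (F.card / 2) := by
  classical
  have hmono : ∀ (A B : Finset (Clause V)), A ⊆ B → Satisfiable B → Satisfiable A := by
    rintro A B hAB ⟨σ, hσ⟩
    exact ⟨σ, fun C hC => hσ C (hAB hC)⟩
  have hanti : ∀ A B : Finset (Clause V), IsMUS F A → IsMUS F B → A ⊆ B → A = B := by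
    intro A B hA hB hAB
    by_contra hne
    obtain ⟨C, hCB, hCA⟩ := Finset.exists_of_ssubset (hAB.ssubset_of_ne hne)
    have hsub : A ⊆ B.erase C := fun x hx =>
      Finset.mem_erase.2 ⟨fun h => hCA (h ▸ hx), hAB hx⟩
    exact hA.2.1 (hmono _ _ hsub (hB.2.2 C hCB))
  set S := {F' : Finset (Clause V) | IsMUS F F'} with hS
  have hfin : S.Finite :=
    Set.Finite.subset (F.powerset : Finset _).finite_toSet
      (fun A hA => by simpa using hA.1)
  rw [Set.ncard_eq_toFinset_card _ hfin]
  set e : Finset (Clause V) → Finset {x // x ∈ F} := fun A => A.subtype (· ∈ F) with he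
  have hrec : ∀ A : Finset (Clause V), A ⊆ F →
      (e A).map (Function.Embedding.subtype _) = A := by
    intro A hAF
    rw [he, Finset.subtype_map]
    exact Finset.filter_true_of_mem (fun x hx => hAF hx)
  have hinj : Set.InjOn e ↑hfin.toFinset := by
    intro A hA B hB hAB
    simp only [Finset.mem_coe, Set.Finite.mem_toFinset] at hA hB
    have h2 : (e A).map (Function.Embedding.subtype (· ∈ F)) =
        (e B).map (Function.Embedding.subtype (· ∈ F)) := by rw [hAB]
    rwa [hrec A hA.1, hrec B hB.1] at h2
  rw [← Finset.card_image_of_injOn hinj]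
  have hantichain : IsAntichain (· ⊆ ·)
      ((hfin.toFinset.image e : Finset (Finset {x // x ∈ F})) : Set (Finset {x // x ∈ F})) := by
    intro a ha b hb hab hle
    simp only [Finset.coe_image, Set.mem_image, Finset.mem_coe,
      Set.Finite.mem_toFinset] at ha hb
    obtain ⟨A, hA, rfl⟩ := ha
    obtain ⟨B, hB, rfl⟩ := hb
    have hAB : A ⊆ B := by
      intro x hx
      have hxF : x ∈ F := hA.1 hx
      have : (⟨x, hxF⟩ : {x // x ∈ F}) ∈ e A := by
        rw [he]; simpa using hx
      have := hle this
      rw [he] at this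
      simpa using this
    exact hab (congrArg e (hanti A B hA hB hAB))
  have := IsAntichain.sperner hantichain
  simpa [Fintype.card_coe] using this
end
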